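/- Let l and m be positive integers with 1 ≤ m ≤ 3l. Then Σ_{k=0}^{m} (2m−3k)² · C(l,m−k) · C(2l,k) = (2m(3l−m)/(3l−1)) · C(3l,m), where the binomial coefficients are zero outside their natural range. -/

import Mathlib

open Finset

lemma vand (a b m : ℕ) :
    ∑ k ∈ Finset.range (m+1), (a.choose (m - k) : ℚ) * (b.choose k : ℚ)
      = ((a+b).choose m : ℚ) := by
  have h := Nat.add_choose_eq a b m
  rw [Finset.Nat.sum_antidiagonal_eq_sum_range_succ_mk] at h
  have h2 : ((a+b).choose m : ℚ)
      = ∑ k ∈ Finset.range (m+1), (a.choose k : ℚ) * (b.choose (m-k) : ℚ) := by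
    rw [h]; push_cast; rfl
  rw [h2, ← Finset.sum_range_reflect]
  apply Finset.sum_congr rfl
  intro k hk
  simp only [Finset.mem_range] at hk
  rw [Nat.add_sub_cancel, Nat.sub_sub_self (Nat.lt_succ_iff.mp hk)]

lemma keyQ (n k : ℕ) (hn : 1 ≤ n) :
    ((k:ℚ)+1) * (n.choose (k+1) : ℚ) = (n : ℚ) * ((n-1).choose k : ℚ) := by
  have h := Nat.add_one_mul_choose_eq (n-1) k
  rw [Nat.sub_add_cancel hn] at h
  have : ((n * (n-1).choose k : ℕ) : ℚ) = ((n.choose (k+1)) * (k+1) : ℕ) := by exact_mod_cast congrArg (fun x : ℕ => (x:ℚ)) h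
  push_cast at this
  linarith [this]

lemma sumB (l m : ℕ) (hl : 1 ≤ l) (hm : 1 ≤ m) :
    ∑ k ∈ Finset.range (m+1), (k:ℚ) * (l.choose (m-k) : ℚ) * ((2*l).choose k : ℚ)
      = 2*(l:ℚ) * ((3*l-1).choose (m-1) : ℚ) := by
  rw [Finset.sum_range_succ']
  have h0 : ((0:ℕ):ℚ) * (l.choose (m-0) : ℚ) * ((2*l).choose 0 : ℚ) = 0 := by simp
  rw [h0, add_zero]
  have hm' : m = (m-1)+1 := (Nat.succ_pred_eq_of_pos hm).symm
  rw [show m = (m-1)+1 from hm']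
  rw [show (m-1)+1-1 = m-1 by omega]
  have := vand l (2*l-1) (m-1)
  rw [show l + (2*l-1) = 3*l-1 by omega] at this
  rw [← this, Finset.mul_sum]
  apply Finset.sum_congr rfl
  intro k hk
  simp only [Finset.mem_range] at hk
  have e1 : (m-1)+1 - (k+1) = (m-1) - k := by omega
  rw [e1]
  push_cast
  rw [mul_comm ((k:ℚ)+1), mul_assoc, keyQ (2*l) k (by omega)]
  push_cast
  ring

lemma sumC (l m : ℕ) (hl : 1 ≤ l) (hm : 2 ≤ m) :
    ∑ k ∈ Finset.range (m+1), (k:ℚ) * ((k:ℚ)-1) * (l.choose (m-k) : ℚ) * ((2*l).choose k : ℚ)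
      = 2*(l:ℚ) * (2*(l:ℚ)-1) * ((3*l-2).choose (m-2) : ℚ) := by
  rw [Finset.sum_range_succ']
  have h0 : ((0:ℕ):ℚ) * (((0:ℕ):ℚ)-1) * (l.choose (m-0) : ℚ) * ((2*l).choose 0 : ℚ) = 0 := by simp
  rw [h0, add_zero]
  rw [show m = (m-1)+1 by omega, Finset.sum_range_succ']
  have h1 : ((0+1:ℕ):ℚ) * (((0+1:ℕ):ℚ)-1) * (l.choose ((m-1)+1-(0+1)) : ℚ) * ((2*l).choose (0+1) : ℚ) = 0 := by
    push_cast; ring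
  rw [h1, add_zero]
  have := vand l (2*l-2) (m-2)
  rw [show l + (2*l-2) = 3*l-2 by omega] at this
  rw [show m-1 = (m-2)+1 by omega]
  rw [show (m-2)+1+1-2 = m-2 by omega]
  rw [← this, Finset.mul_sum]
  apply Finset.sum_congr rfl
  intro k hk
  simp only [Finset.mem_range] at hk
  have e1 : (m-2)+1+1 - (k+1+1) = (m-2) - k := by omega
  rw [e1]
  push_cast
  have k1 : ((k:ℚ)+1+1) * ((2*l).choose (k+1+1) : ℚ) = (2*(l:ℚ)) * ((2*l-1).choose (k+1) : ℚ) := by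
    have := keyQ (2*l) (k+1) (by omega)
    push_cast at this ⊢
    linarith [this]
  have k2 : ((k:ℚ)+1) * ((2*l-1).choose (k+1) : ℚ) = (2*(l:ℚ)-1) * ((2*l-2).choose k : ℚ) := by
    have := keyQ (2*l-1) k (by omega)
    rw [show 2*l-1-1 = 2*l-2 by omega] at this
    have c : ((2*l-1:ℕ):ℚ) = 2*(l:ℚ)-1 := by
      have : 1 ≤ 2*l := by omega
      push_cast [this]; ring
    rw [c] at this
    exact this
  calc ((k:ℚ)+1+1) * ((k:ℚ)+1+1-1) * (l.choose (m-2-k) : ℚ) * ((2*l).choose (k+1+1) : ℚ)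
      = (((k:ℚ)+1+1) * ((2*l).choose (k+1+1) : ℚ)) * (((k:ℚ)+1) * (l.choose (m-2-k) : ℚ)) := by ring
    _ = (2*(l:ℚ)) * ((2*l-1).choose (k+1) : ℚ) * (((k:ℚ)+1) * (l.choose (m-2-k) : ℚ)) := by rw [k1]
    _ = (2*(l:ℚ)) * (((k:ℚ)+1) * ((2*l-1).choose (k+1) : ℚ)) * (l.choose (m-2-k) : ℚ) := by ring
    _ = (2*(l:ℚ)) * ((2*(l:ℚ)-1) * ((2*l-2).choose k : ℚ)) * (l.choose (m-2-k) : ℚ) := by rw [k2]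
    _ = 2*(l:ℚ) * (2*(l:ℚ)-1) * ((l.choose (m-2-k) : ℚ) * ((2*l-2).choose k : ℚ)) := by ring

/-- For positive integers `l, m` with `1 ≤ m ≤ 3l`:
`∑_{k=0}^{m} (2m-3k)² · C(l,m-k) · C(2l,k) = (2m(3l-m)/(3l-1)) · C(3l,m)`,
with the convention `C(a,b) = 0` when `b > a`. -/
theorem stmt_15 (l m : ℕ) (hl : 1 ≤ l) (hm1 : 1 ≤ m) (hm2 : m ≤ 3 * l) :
    ∑ k ∈ Finset.range (m + 1),
        (2 * (m : ℚ) - 3 * (k : ℚ)) ^ 2 * (l.choose (m - k) : ℚ) * ((2 * l).choose k : ℚ)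
      = 2 * (m : ℚ) * (3 * (l : ℚ) - (m : ℚ)) / (3 * (l : ℚ) - 1) * ((3 * l).choose m : ℚ) := by
  have hS0 : ∑ k ∈ Finset.range (m+1), (l.choose (m-k) : ℚ) * ((2*l).choose k : ℚ)
      = ((3*l).choose m : ℚ) := by
    have := vand l (2*l) m
    rwa [show l + 2*l = 3*l by ring] at this
  have split : ∑ k ∈ Finset.range (m + 1),
        (2 * (m : ℚ) - 3 * (k : ℚ)) ^ 2 * (l.choose (m - k) : ℚ) * ((2 * l).choose k : ℚ)
      = 4*(m:ℚ)^2 * (∑ k ∈ Finset.range (m+1), (l.choose (m-k) : ℚ) * ((2*l).choose k : ℚ))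
        + (9 - 12*(m:ℚ)) * (∑ k ∈ Finset.range (m+1), (k:ℚ) * (l.choose (m-k) : ℚ) * ((2*l).choose k : ℚ))
        + 9 * (∑ k ∈ Finset.range (m+1), (k:ℚ) * ((k:ℚ)-1) * (l.choose (m-k) : ℚ) * ((2*l).choose k : ℚ)) := by
    rw [Finset.mul_sum, Finset.mul_sum, Finset.mul_sum, ← Finset.sum_add_distrib,
      ← Finset.sum_add_distrib]
    apply Finset.sum_congr rfl
    intro k _
    ring
  rw [split, hS0, sumB l m hl hm1]
  have hne : 3*(l:ℚ) - 1 ≠ 0 := by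
    have : (1:ℚ) ≤ (l:ℚ) := by exact_mod_cast hl
    nlinarith
  rcases Nat.lt_or_ge m 2 with hm | hm
  · -- m = 1
    have : m = 1 := by omega
    subst this
    have hsum : ∑ k ∈ Finset.range (1+1), (k:ℚ) * ((k:ℚ)-1) * (l.choose (1-k) : ℚ) * ((2*l).choose k : ℚ) = 0 := by
      simp [Finset.sum_range_succ]
    rw [hsum]
    have hB : ((3*l-1).choose (1-1) : ℚ) = 1 := by norm_num
    have hX : ((3*l).choose 1 : ℚ) = 3*(l:ℚ) := by
      rw [Nat.choose_one_right]; push_cast; ring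
    rw [hB, hX]
    field_simp
    ring
  · -- m ≥ 2
    rw [sumC l m hl hm]
    set X := ((3*l).choose m : ℚ) with hXdef
    set B := ((3*l-1).choose (m-1) : ℚ) with hBdef
    set Cc := ((3*l-2).choose (m-2) : ℚ) with hCdef
    have h1 : (3*l) * ((3*l-1).choose (m-1)) = ((3*l).choose m) * m := by
      have h := Nat.add_one_mul_choose_eq (3*l-1) (m-1)
      rw [Nat.sub_add_cancel (by omega : 1 ≤ 3*l), Nat.sub_add_cancel hm1] at h
      exact h
    have h2 : (3*l-1) * ((3*l-2).choose (m-2)) = ((3*l-1).choose (m-1)) * (m-1) := by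
      have h := Nat.add_one_mul_choose_eq (3*l-2) (m-2)
      rw [show 3*l-2+1 = 3*l-1 by omega, show m-2+1 = m-1 by omega] at h
      exact h
    have hq1 : 3*(l:ℚ) * B = X * (m:ℚ) := by
      have := congrArg (fun x : ℕ => (x:ℚ)) h1
      push_cast at this
      rw [hXdef, hBdef]
      exact_mod_cast this
    have hq2 : (3*(l:ℚ)-1) * Cc = B * ((m:ℚ)-1) := by
      have := congrArg (fun x : ℕ => (x:ℚ)) h2
      push_cast at this
      have c1 : ((3*l-1:ℕ):ℚ) = 3*(l:ℚ)-1 := by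
        have hle : 1 ≤ 3*l := by omega
        push_cast [hle]; ring
      have c3 : ((m-1:ℕ):ℚ) = (m:ℚ)-1 := by
        push_cast [hm1]; ring
      rw [c1, c3] at this
      rw [hBdef, hCdef]
      exact this
    rw [div_mul_eq_mul_div, eq_div_iff hne]
    linear_combination (2*(3*(l:ℚ) - 6*l*m + m)) * hq1 + (18*(l:ℚ)*(2*(l:ℚ)-1)) * hq2
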